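/- Side-decision lemma: let ι be a nonempty finite index set, q : ι → ℝ², f : ι → ℝ, F(x) = max_{i ∈ ι} (dist(x, q_i) + f_i), let u ∈ ℝ² with u ≠ 0, and let c ∈ ℝ². Assume (1) c minimizes F on the line L = {y : ⟨y − c, u⟩ = 0}, i.e., F(c) ≤ F(y) for all y with ⟨y − c, u⟩ = 0; and (2) every index i with dist(c, q_i) + f_i = F(c) satisfies ⟨q_i − c, u⟩ > 0. Then every global minimizer x* of F (i.e., every x* with F(x*) ≤ F(x) for all x) satisfies ⟨x* − c, u⟩ > 0. (This justifies deciding, from the constrained center on a chord and the directions to its farthest neighbors, on which side of the chord the geodesic center lies.) -/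

import Mathlib

/-!
Moving from `c` a little in the direction `u` strictly decreases `F`: the distances to the
farthest neighbours decrease because each of them lies ahead of `c` in direction `u`, and the
other terms stay below `F c` by continuity. Hence the sublevel set `{F < F c}` contains a point
on the positive side of the line `⟪y - c, u⟫ = 0`. This set is convex and, by minimality of `c`
on the line, misses the line, so it lies entirely on the positive side; every global minimizer
belongs to it.
-/

open scoped RealInnerProductSpace
open Filter Topology Set

theorem Finset.convexOn_sup' {𝕜 E ι β : Type*} [Semiring 𝕜] [PartialOrder 𝕜] [AddCommMonoid E]
    [SMul 𝕜 E] [AddCommMonoid β] [LinearOrder β] [IsOrderedAddMonoid β] [Module 𝕜 β]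
    [PosSMulStrictMono 𝕜 β]
    {t : Set E} {s : Finset ι} (H : s.Nonempty) {g : ι → E → β}
    (hg : ∀ i ∈ s, ConvexOn 𝕜 t (g i)) : ConvexOn 𝕜 t (s.sup' H g) :=
  Finset.sup'_induction H g (fun _ h₁ _ h₂ => h₁.sup h₂) hg

theorem IsPreconnected.pos_of_pos_of_ne_zero {X : Type*} [TopologicalSpace X] {S : Set X}
    (hS : IsPreconnected S) {φ : X → ℝ} (hφ : ContinuousOn φ S) (h0 : ∀ z ∈ S, φ z ≠ 0)
    {p x : X} (hp : p ∈ S) (hφp : 0 < φ p) (hx : x ∈ S) : 0 < φ x := by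
  by_contra! hφx
  obtain ⟨z, hz, hφz⟩ := hS.intermediate_value hx hp hφ ⟨hφx, hφp.le⟩
  exact h0 z hz hφz

section InnerProductSpace

variable {E : Type*} [NormedAddCommGroup E] [InnerProductSpace ℝ E]

theorem dist_add_smul_lt_dist {c q u : E} {t : ℝ} (ht : 0 < t)
    (htu : t * ‖u‖ ^ 2 < 2 * ⟪q - c, u⟫) : dist (c + t • u) q < dist c q := by
  have hsq : dist (c + t • u) q ^ 2 = dist c q ^ 2 + t * (t * ‖u‖ ^ 2 - 2 * ⟪q - c, u⟫) := by
    rw [dist_eq_norm, dist_eq_norm, add_sub_right_comm, norm_add_sq_real, norm_smul,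
      real_inner_smul_right, Real.norm_eq_abs, mul_pow, sq_abs, ← neg_sub q c, inner_neg_left]
    ring
  refine lt_of_pow_lt_pow_left₀ 2 dist_nonneg ?_
  rw [hsq]
  nlinarith

theorem eventually_dist_add_smul_lt_dist {c q u : E} (h : 0 < ⟪q - c, u⟫) :
    ∀ᶠ t in 𝓝[>] (0 : ℝ), dist (c + t • u) q < dist c q := by
  have hlim : Tendsto (fun t : ℝ => t * ‖u‖ ^ 2) (𝓝[>] 0) (𝓝 0) := by
    simpa using ((continuous_mul_const (‖u‖ ^ 2)).tendsto 0).mono_left nhdsWithin_le_nhds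
  filter_upwards [eventually_mem_nhdsWithin, hlim.eventually (gt_mem_nhds (mul_pos two_pos h))]
    with t ht htu using dist_add_smul_lt_dist ht htu

end InnerProductSpace

section EnclosingRadius

variable {ι E : Type*} [Fintype ι] [Nonempty ι]

def enclosingRadius [PseudoMetricSpace E] (q : ι → E) (f : ι → ℝ) (x : E) : ℝ :=
  Finset.univ.sup' Finset.univ_nonempty fun i => dist x (q i) + f i

theorem le_enclosingRadius [PseudoMetricSpace E] (q : ι → E) (f : ι → ℝ) (x : E) (i : ι) :
    dist x (q i) + f i ≤ enclosingRadius q f x :=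
  Finset.le_sup' (fun j => dist x (q j) + f j) (Finset.mem_univ i)

theorem convexOn_enclosingRadius [SeminormedAddCommGroup E] [NormedSpace ℝ E] (q : ι → E)
    (f : ι → ℝ) : ConvexOn ℝ univ (enclosingRadius q f) := by
  have h : enclosingRadius q f = Finset.univ.sup' Finset.univ_nonempty
      fun i x => dist x (q i) + f i :=
    funext fun x => (Finset.sup'_apply _ (fun i x => dist x (q i) + f i) x).symm
  rw [h]
  exact Finset.convexOn_sup' _ fun i _ => (convexOn_dist (q i) convex_univ).add_const (f i)

theorem exists_pos_enclosingRadius_add_smul_lt [NormedAddCommGroup E] [InnerProductSpace ℝ E]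
    (q : ι → E) (f : ι → ℝ) {c u : E}
    (hactive : ∀ i, dist c (q i) + f i = enclosingRadius q f c → 0 < ⟪q i - c, u⟫) :
    ∃ t : ℝ, 0 < t ∧ enclosingRadius q f (c + t • u) < enclosingRadius q f c := by
  have h : ∀ i, ∀ᶠ t in 𝓝[>] (0 : ℝ), dist (c + t • u) (q i) + f i < enclosingRadius q f c := by
    intro i
    rcases (le_enclosingRadius q f c i).eq_or_lt with hi | hi
    · filter_upwards [eventually_dist_add_smul_lt_dist (hactive i hi)] with t ht
      linarith
    · have hcont : ContinuousAt (fun t : ℝ => dist (c + t • u) (q i) + f i) 0 := by fun_prop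
      exact nhdsWithin_le_nhds (hcont.eventually (gt_mem_nhds (by simpa using hi)))
  obtain ⟨t, hlt, ht⟩ := ((eventually_all.2 h).and self_mem_nhdsWithin).exists
  exact ⟨t, ht, Finset.sup'_lt_iff _ |>.2 fun i _ => hlt i⟩

end EnclosingRadius

theorem side_decision_general {ι : Type*} [Fintype ι] [Nonempty ι]
    (q : ι → EuclideanSpace ℝ (Fin 2)) (f : ι → ℝ)
    (F : EuclideanSpace ℝ (Fin 2) → ℝ)
    (hF : ∀ x, F x = Finset.univ.sup' Finset.univ_nonempty fun i => dist x (q i) + f i)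
    (u c : EuclideanSpace ℝ (Fin 2))
    (hmin : ∀ y : EuclideanSpace ℝ (Fin 2), ⟪y - c, u⟫ = 0 → F c ≤ F y)
    (hactive : ∀ i, dist c (q i) + f i = F c → 0 < ⟪q i - c, u⟫) :
    ∀ x : EuclideanSpace ℝ (Fin 2), (∀ y, F x ≤ F y) → 0 < ⟪x - c, u⟫ := by
  obtain rfl : F = enclosingRadius q f := funext hF
  intro x hx
  obtain ⟨t, ht, hdescent⟩ := exists_pos_enclosingRadius_add_smul_lt q f hactive
  set S := {y | enclosingRadius q f y < enclosingRadius q f c}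
  have hS : Convex ℝ S := by simpa using (convexOn_enclosingRadius q f).convex_lt _
  have hoff : ∀ z ∈ S, ⟪z - c, u⟫ ≠ 0 := fun z hz h0 => (hmin z h0).not_gt hz
  have hside : 0 ≤ ⟪c + t • u - c, u⟫ := by
    rw [add_sub_cancel_left, real_inner_smul_left, real_inner_self_eq_norm_sq]
    positivity
  exact hS.isPreconnected.pos_of_pos_of_ne_zero (by fun_prop) hoff hdescent
    (hside.lt_of_ne (hoff _ hdescent).symm) ((hx _).trans_lt hdescent)

/-- Side-decision lemma: if `c` minimizes `F` on the line `{y : ⟪y - c, u⟫ = 0}` and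
every farthest index at `c` satisfies `⟪q i - c, u⟫ > 0`, then every global minimizer
`x*` of `F` satisfies `⟪x* - c, u⟫ > 0`. -/
theorem side_decision {ι : Type*} [Fintype ι] [Nonempty ι]
    (q : ι → EuclideanSpace ℝ (Fin 2)) (f : ι → ℝ)
    (F : EuclideanSpace ℝ (Fin 2) → ℝ)
    (hF : ∀ x, F x = Finset.univ.sup' Finset.univ_nonempty fun i => dist x (q i) + f i)
    (u c : EuclideanSpace ℝ (Fin 2)) (hu : u ≠ 0)
    (hmin : ∀ y : EuclideanSpace ℝ (Fin 2), ⟪y - c, u⟫ = 0 → F c ≤ F y)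
    (hactive : ∀ i, dist c (q i) + f i = F c → 0 < ⟪q i - c, u⟫) :
    ∀ x : EuclideanSpace ℝ (Fin 2), (∀ y, F x ≤ F y) → 0 < ⟪x - c, u⟫ :=
  side_decision_general q f F hF u c hmin hactive
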